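/- Assume Condition (C) with ℓ(θ) ≡ 1, and assume p_θ(1−) := sup_{0 ≤ r < 1} p_θ(r) < ∞ for every θ ∈ [0,2π); extend p_θ to [0,1] by p_θ(1) := p_θ(1−). Let U be a bounded Borel function on the closed unit disc B̄ which is continuous in the tree-topology, and let c ≥ U(0). For each θ let U⁽ᶜ⁾_θ(r) := inf{ φ(r) : φ : [0,1] → ℝ is p_θ-concave, φ ≥ U_θ on [0,1], φ(0) ≥ c }, and define U⁽ᶜ⁾ on B̄ ray-wise by U⁽ᶜ⁾(r,θ) := U⁽ᶜ⁾_θ(r). Then U⁽ᶜ⁾ is continuous on B̄ in the tree-topology; in particular U⁽ᶜ⁾(0) = c, U⁽ᶜ⁾(1,θ) = U(1,θ) for every θ, and sup_{θ ∈ [0,2π)} |U⁽ᶜ⁾_θ(r) − c| → 0 as r ↓ 0. -/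

import Mathlib

open MeasureTheory Set
open scoped Classical ENNReal

/-- `p′_θ(y) = exp(−2∫₀^y b(z,θ)/s(z,θ)² dz)`, the derivative of the radial scale function. -/
noncomputable def pprime (b s : ℝ → ℝ → ℝ) (θ y : ℝ) : ℝ :=
  Real.exp (-2 * ∫ z in (0:ℝ)..y, b z θ / (s z θ) ^ 2)

/-- The radial scale function `p_θ(r) = ∫₀^r p′_θ(y) dy`. -/
noncomputable def pscale (b s : ℝ → ℝ → ℝ) (θ r : ℝ) : ℝ :=
  ∫ y in (0:ℝ)..r, pprime b s θ y

/-- Condition (C): `ℓ` is measurable and bounded away from zero, `b` and `s` are Borel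
measurable on `Ǐ`, `s` vanishes nowhere on `Ǐ`, `b/s²` and `1/s²` are locally integrable
on `(0,ℓ(θ))` along each ray, and `(1+|b|)/s²` is bounded near the origin. -/
structure CondC (ℓ : ℝ → ℝ≥0∞) (b s : ℝ → ℝ → ℝ) : Prop where
  meas_ell : Measurable ℓ
  ell_pos : 0 < ⨅ θ ∈ Ico (0:ℝ) (2 * Real.pi), ℓ θ
  meas_b : Measurable
    (Set.restrict {q : ℝ × ℝ | 0 < q.1 ∧ ENNReal.ofReal q.1 < ℓ q.2 ∧
      q.2 ∈ Ico (0:ℝ) (2 * Real.pi)} (fun q => b q.1 q.2))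
  meas_s : Measurable
    (Set.restrict {q : ℝ × ℝ | 0 < q.1 ∧ ENNReal.ofReal q.1 < ℓ q.2 ∧
      q.2 ∈ Ico (0:ℝ) (2 * Real.pi)} (fun q => s q.1 q.2))
  s_ne : ∀ θ ∈ Ico (0:ℝ) (2 * Real.pi), ∀ r : ℝ, 0 < r → ENNReal.ofReal r < ℓ θ →
    s r θ ≠ 0
  loc_int_b : ∀ θ ∈ Ico (0:ℝ) (2 * Real.pi), ∀ r₁ r₂ : ℝ, 0 < r₁ → r₁ ≤ r₂ →
    ENNReal.ofReal r₂ < ℓ θ → IntegrableOn (fun z => b z θ / (s z θ) ^ 2) (Icc r₁ r₂)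
  loc_int_s : ∀ θ ∈ Ico (0:ℝ) (2 * Real.pi), ∀ r₁ r₂ : ℝ, 0 < r₁ → r₁ ≤ r₂ →
    ENNReal.ofReal r₂ < ℓ θ → IntegrableOn (fun z => 1 / (s z θ) ^ 2) (Icc r₁ r₂)
  bound_near_origin : ∃ η : ℝ, 0 < η ∧
    ENNReal.ofReal η < (⨅ θ ∈ Ico (0:ℝ) (2 * Real.pi), ℓ θ) ∧
    ∃ C : ℝ, ∀ θ ∈ Ico (0:ℝ) (2 * Real.pi), ∀ r ∈ Ioc (0:ℝ) η,
      (1 + |b r θ|) / (s r θ) ^ 2 ≤ C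

/-- Two points of the plane lie on the same ray emanating from the origin. -/
def OnSameRay (x y : EuclideanSpace ℝ (Fin 2)) : Prop :=
  x = 0 ∨ y = 0 ∨ ∃ t : ℝ, 0 < t ∧ y = t • x

/-- The tree-metric on the plane. -/
noncomputable def treeDist (x y : EuclideanSpace ℝ (Fin 2)) : ℝ :=
  if OnSameRay x y then |‖x‖ - ‖y‖| else ‖x‖ + ‖y‖

/-- The point of the plane with polar coordinates `(r, θ)`. -/
noncomputable def polar (r θ : ℝ) : EuclideanSpace ℝ (Fin 2) :=
  (WithLp.equiv 2 (Fin 2 → ℝ)).symm ![r * Real.cos θ, r * Real.sin θ]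

/-- The argument of a planar point, normalized to lie in `[0, 2π)`. -/
noncomputable def argOf (x : EuclideanSpace ℝ (Fin 2)) : ℝ :=
  if Complex.arg (⟨x 0, x 1⟩ : ℂ) < 0 then Complex.arg (⟨x 0, x 1⟩ : ℂ) + 2 * Real.pi
  else Complex.arg (⟨x 0, x 1⟩ : ℂ)

/-- The radial scale function extended to `[0,1]` by `p_θ(1) := p_θ(1−)`. -/
noncomputable def pbar (b s : ℝ → ℝ → ℝ) (θ r : ℝ) : ℝ :=
  if r < 1 then pscale b s θ r else sSup (pscale b s θ '' Ico (0:ℝ) 1)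

/-- A function `φ : [0,1] → ℝ` is `p`-concave if `φ = ψ ∘ p` on `[0,1]` for some
continuous concave function `ψ : [0, p(1)] → ℝ`. -/
def PConcave (p φ : ℝ → ℝ) : Prop :=
  ∃ ψ : ℝ → ℝ, ContinuousOn ψ (Icc 0 (p 1)) ∧ ConcaveOn ℝ (Icc 0 (p 1)) ψ ∧
    ∀ r ∈ Icc (0:ℝ) 1, φ r = ψ (p r)

/-- `U⁽ᶜ⁾_θ(r)`: the infimum over all `p_θ`-concave majorants `φ` of `U` along the ray
of angle `θ` with `φ(0) ≥ c`. -/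
noncomputable def UcTheta (b s : ℝ → ℝ → ℝ) (U : EuclideanSpace ℝ (Fin 2) → ℝ)
    (c θ r : ℝ) : ℝ :=
  sInf {y : ℝ | ∃ φ : ℝ → ℝ, PConcave (pbar b s θ) φ ∧
    (∀ t ∈ Icc (0:ℝ) 1, U (polar t θ) ≤ φ t) ∧ c ≤ φ 0 ∧ y = φ r}

/-- `U⁽ᶜ⁾` defined ray-wise on the closed unit disc. -/
noncomputable def UcDisc (b s : ℝ → ℝ → ℝ) (U : EuclideanSpace ℝ (Fin 2) → ℝ) (c : ℝ)
    (x : EuclideanSpace ℝ (Fin 2)) : ℝ :=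
  UcTheta b s U c (argOf x) ‖x‖

/-!
Along a ray, in the scale `x = p_θ(r)`, `U⁽ᶜ⁾_θ` is the lower envelope `G` of the continuous
concave majorants `ψ` on `[0, p_θ(1)]` with `U_θ ≤ ψ ∘ p_θ` and `ψ(0) ≥ c`. As an infimum of
concave functions `G` is concave, hence continuous inside the interval, and `p_θ` is a continuous
increasing bijection of `[0,1]` onto `[0, p_θ(1)]`; this gives continuity at interior radii. At
the endpoint, steep affine majorants through `(p_θ(1), U(1,θ) + ε)` force `G → U(1,θ)`. Near the
origin `G` is squeezed between an affine majorant `c + ε + K x` and the chord from `(0, c)` to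
`(p_θ(1), U(1,θ))`; by condition (C) `p_θ(r)` is comparable to `r` uniformly in `θ`, so
`U⁽ᶜ⁾_θ(r) → c` uniformly. Tree-continuity follows, since points closer in the tree metric to
`x ≠ 0` than `‖x‖` lie on the ray through `x`.
-/

open Filter Topology

lemma norm_polar (r θ : ℝ) : ‖polar r θ‖ = |r| := by
  simp [polar, EuclideanSpace.norm_eq, Fin.sum_univ_two, mul_pow, ← mul_add, Real.sqrt_sq_eq_abs]

lemma polar_zero (θ : ℝ) : polar 0 θ = 0 := by
  ext i; fin_cases i <;> simp [polar]

lemma smul_polar (t r θ : ℝ) : t • polar r θ = polar (t * r) θ := by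
  ext i; fin_cases i <;> simp [polar, mul_assoc]

lemma argOf_mem (x : EuclideanSpace ℝ (Fin 2)) : argOf x ∈ Ico (0:ℝ) (2 * Real.pi) := by
  have h1 := Complex.arg_le_pi (⟨x 0, x 1⟩ : ℂ)
  have h2 := Complex.neg_pi_lt_arg (⟨x 0, x 1⟩ : ℂ)
  unfold argOf
  split_ifs with h <;> constructor <;> linarith [Real.pi_pos]

lemma argOf_smul {t : ℝ} (ht : 0 < t) (x : EuclideanSpace ℝ (Fin 2)) :
    argOf (t • x) = argOf x := by
  have : (⟨(t • x) 0, (t • x) 1⟩ : ℂ) = (t : ℂ) * ⟨x 0, x 1⟩ := by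
    apply Complex.ext <;> simp
  rw [argOf, argOf, this, Complex.arg_real_mul _ ht]

lemma treeDist_zero_right (x : EuclideanSpace ℝ (Fin 2)) : treeDist x 0 = ‖x‖ := by
  simp [treeDist, OnSameRay]

lemma treeDist_zero_left (y : EuclideanSpace ℝ (Fin 2)) : treeDist 0 y = ‖y‖ := by
  simp [treeDist, OnSameRay]

lemma treeDist_polar_polar (θ : ℝ) {r t : ℝ} (hr : 0 ≤ r) (ht : 0 ≤ t) :
    treeDist (polar r θ) (polar t θ) = |r - t| := by
  have hray : OnSameRay (polar r θ) (polar t θ) := by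
    rcases hr.eq_or_lt with rfl | hr
    · exact Or.inl (polar_zero θ)
    rcases ht.eq_or_lt with rfl | ht
    · exact Or.inr (Or.inl (polar_zero θ))
    exact Or.inr (Or.inr ⟨t / r, div_pos ht hr, by rw [smul_polar, div_mul_cancel₀ _ hr.ne']⟩)
  rw [treeDist, if_pos hray, norm_polar, norm_polar, abs_of_nonneg hr, abs_of_nonneg ht]

lemma onSameRay_of_treeDist_lt_norm {x y : EuclideanSpace ℝ (Fin 2)}
    (h : treeDist x y < ‖x‖) : OnSameRay x y := by
  by_contra hxy
  rw [treeDist, if_neg hxy] at h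
  linarith [norm_nonneg y]

lemma norm_polar_le_one (θ : ℝ) {t : ℝ} (ht : t ∈ Icc (0:ℝ) 1) : ‖polar t θ‖ ≤ 1 := by
  rw [norm_polar, abs_of_nonneg ht.1]; exact ht.2

lemma continuousWithinAt_comp_polar {U : EuclideanSpace ℝ (Fin 2) → ℝ}
    (hU : ∀ x : EuclideanSpace ℝ (Fin 2), ‖x‖ ≤ 1 → ∀ ε > (0:ℝ), ∃ δ > (0:ℝ),
      ∀ y : EuclideanSpace ℝ (Fin 2), ‖y‖ ≤ 1 → treeDist x y < δ → |U y - U x| < ε)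
    (θ : ℝ) {r : ℝ} (hr : r ∈ Icc (0:ℝ) 1) :
    ContinuousWithinAt (fun t => U (polar t θ)) (Icc 0 1) r := by
  refine Metric.continuousWithinAt_iff.2 fun ε hε => ?_
  obtain ⟨δ, hδ, hUδ⟩ := hU _ (norm_polar_le_one θ hr) ε hε
  refine ⟨δ, hδ, fun t ht htr => ?_⟩
  rw [Real.dist_eq] at htr ⊢
  exact hUδ _ (norm_polar_le_one θ ht)
    (by rwa [treeDist_polar_polar θ hr.1 ht.1, abs_sub_comm])

lemma treeContinuous_of_rays (g : ℝ → ℝ → ℝ) (a : ℝ)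
    (hzero : ∀ ε > (0:ℝ), ∃ δ > (0:ℝ), ∀ θ ∈ Ico (0:ℝ) (2 * Real.pi), ∀ r ∈ Icc (0:ℝ) 1,
      r < δ → |g θ r - a| < ε)
    (hray : ∀ θ ∈ Ico (0:ℝ) (2 * Real.pi), ∀ r ∈ Ioc (0:ℝ) 1,
      ContinuousWithinAt (g θ) (Icc 0 1) r)
    {x : EuclideanSpace ℝ (Fin 2)} (hx : ‖x‖ ≤ 1) :
    ∀ ε > (0:ℝ), ∃ δ > (0:ℝ), ∀ y : EuclideanSpace ℝ (Fin 2), ‖y‖ ≤ 1 → treeDist x y < δ →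
      |g (argOf y) ‖y‖ - g (argOf x) ‖x‖| < ε := by
  intro ε hε
  rcases eq_or_ne x 0 with rfl | hx0
  · obtain ⟨δ, hδ, hg⟩ := hzero (ε / 2) (half_pos hε)
    refine ⟨δ, hδ, fun y hy hxy => ?_⟩
    rw [treeDist_zero_left] at hxy
    have hy' := hg (argOf y) (argOf_mem y) ‖y‖ ⟨norm_nonneg y, hy⟩ hxy
    have h0 := hg (argOf 0) (argOf_mem 0) 0 (left_mem_Icc.2 zero_le_one) hδ
    rw [norm_zero]
    calc _ ≤ |g (argOf y) ‖y‖ - a| + |a - g (argOf 0) 0| := abs_sub_le _ _ _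
      _ < ε := by rw [abs_sub_comm a]; linarith
  · have hxpos : 0 < ‖x‖ := norm_pos_iff.2 hx0
    obtain ⟨δ, hδ, hg⟩ := Metric.continuousWithinAt_iff.1
      (hray (argOf x) (argOf_mem x) ‖x‖ ⟨hxpos, hx⟩) ε hε
    refine ⟨min δ ‖x‖, lt_min hδ hxpos, fun y hy hxy => ?_⟩
    have hlt : treeDist x y < ‖x‖ := hxy.trans_le (min_le_right _ _)
    have hsame := onSameRay_of_treeDist_lt_norm hlt
    obtain ⟨t, ht, rfl⟩ : ∃ t : ℝ, 0 < t ∧ y = t • x := by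
      rcases hsame with h | rfl | h
      · exact absurd h hx0
      · exact absurd (treeDist_zero_right x ▸ hlt) (lt_irrefl _)
      · exact h
    have hdist : treeDist x (t • x) = |‖x‖ - ‖t • x‖| := if_pos hsame
    rw [argOf_smul ht, ← Real.dist_eq]
    exact hg ⟨norm_nonneg _, hy⟩
      (by rw [Real.dist_eq, abs_sub_comm, ← hdist]; exact hxy.trans_le (min_le_left _ _))

def concaveMajorants (p u : ℝ → ℝ) (c : ℝ) : Set (ℝ → ℝ) :=
  {ψ | ContinuousOn ψ (Icc 0 (p 1)) ∧ ConcaveOn ℝ (Icc 0 (p 1)) ψ ∧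
    (∀ t ∈ Icc (0:ℝ) 1, u t ≤ ψ (p t)) ∧ c ≤ ψ 0}

noncomputable def concaveEnvelope (p u : ℝ → ℝ) (c x : ℝ) : ℝ :=
  sInf ((fun ψ => ψ x) '' concaveMajorants p u c)

section ConcaveEnvelope

variable {p u : ℝ → ℝ} {c M : ℝ}

lemma affine_mem_concaveMajorants {k d : ℝ} (hd : c ≤ d)
    (hu : ∀ t ∈ Icc (0:ℝ) 1, u t ≤ k * p t + d) :
    (fun x => k * x + d) ∈ concaveMajorants p u c :=
  ⟨by fun_prop, ((LinearMap.mul ℝ ℝ k).concaveOn (convex_Icc _ _)).add_const d, hu,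
    by simpa using hd⟩

lemma concaveMajorants_nonempty (hu : ∀ t ∈ Icc (0:ℝ) 1, u t ≤ M) :
    (concaveMajorants p u c).Nonempty :=
  ⟨_, affine_mem_concaveMajorants (k := 0) (le_max_left c M)
    fun t ht => by simpa using (hu t ht).trans (le_max_right c M)⟩

lemma sub_le_of_mem_concaveMajorants (hp1 : 0 < p 1) {ψ : ℝ → ℝ}
    (hψ : ψ ∈ concaveMajorants p u c) {x : ℝ} (hx : x ∈ Icc 0 (p 1)) :
    c - x / p 1 * (c - u 1) ≤ ψ x := by
  obtain ⟨-, hconc, hmaj, hc⟩ := hψ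
  set a := x / p 1
  have ha0 : 0 ≤ a := div_nonneg hx.1 hp1.le
  have ha1 : a ≤ 1 := (div_le_one hp1).2 hx.2
  have hcomb := hconc.2 (left_mem_Icc.2 hp1.le) (right_mem_Icc.2 hp1.le)
    (sub_nonneg.2 ha1) ha0 (by ring)
  have hx' : (1 - a) • (0:ℝ) + a • p 1 = x := by
    simp [a, div_mul_cancel₀ _ hp1.ne']
  rw [hx', smul_eq_mul, smul_eq_mul] at hcomb
  have h1 := hmaj 1 (right_mem_Icc.2 zero_le_one)
  nlinarith

lemma bddBelow_concaveMajorants_apply (hp1 : 0 < p 1) {x : ℝ} (hx : x ∈ Icc 0 (p 1)) :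
    BddBelow ((fun ψ => ψ x) '' concaveMajorants p u c) :=
  ⟨_, forall_mem_image.2 fun _ hψ => sub_le_of_mem_concaveMajorants hp1 hψ hx⟩

lemma concaveEnvelope_le (hp1 : 0 < p 1) {ψ : ℝ → ℝ} (hψ : ψ ∈ concaveMajorants p u c)
    {x : ℝ} (hx : x ∈ Icc 0 (p 1)) : concaveEnvelope p u c x ≤ ψ x :=
  csInf_le (bddBelow_concaveMajorants_apply hp1 hx) (mem_image_of_mem _ hψ)

lemma le_concaveEnvelope (hu : ∀ t ∈ Icc (0:ℝ) 1, u t ≤ M) {x a : ℝ}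
    (h : ∀ ψ ∈ concaveMajorants p u c, a ≤ ψ x) : a ≤ concaveEnvelope p u c x :=
  le_csInf ((concaveMajorants_nonempty hu).image _) (forall_mem_image.2 h)

lemma le_concaveEnvelope_comp (hu : ∀ t ∈ Icc (0:ℝ) 1, u t ≤ M) {t : ℝ}
    (ht : t ∈ Icc (0:ℝ) 1) : u t ≤ concaveEnvelope p u c (p t) :=
  le_concaveEnvelope hu fun _ hψ => hψ.2.2.1 t ht

lemma concaveOn_concaveEnvelope (hp1 : 0 < p 1) (hu : ∀ t ∈ Icc (0:ℝ) 1, u t ≤ M) :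
    ConcaveOn ℝ (Icc 0 (p 1)) (concaveEnvelope p u c) := by
  refine ⟨convex_Icc _ _, fun x hx y hy a b ha hb hab => le_concaveEnvelope hu fun ψ hψ => ?_⟩
  calc a • concaveEnvelope p u c x + b • concaveEnvelope p u c y ≤ a • ψ x + b • ψ y := by
        gcongr <;> exact concaveEnvelope_le hp1 hψ ‹_›
    _ ≤ ψ (a • x + b • y) := hψ.2.1.2 hx hy ha hb hab

lemma continuousOn_concaveEnvelope (hp1 : 0 < p 1) (hu : ∀ t ∈ Icc (0:ℝ) 1, u t ≤ M) :
    ContinuousOn (concaveEnvelope p u c) (Ioo 0 (p 1)) := by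
  simpa using (concaveOn_concaveEnvelope hp1 hu).continuousOn_interior

lemma apply_mem_Icc_of_monotoneOn (hp0 : p 0 = 0) (hmono : MonotoneOn p (Icc 0 1)) {t : ℝ}
    (ht : t ∈ Icc (0:ℝ) 1) : p t ∈ Icc 0 (p 1) :=
  ⟨hp0 ▸ hmono (left_mem_Icc.2 zero_le_one) ht ht.1,
    hmono ht (right_mem_Icc.2 zero_le_one) ht.2⟩

lemma abs_concaveEnvelope_sub_le (hp0 : p 0 = 0) (hmono : MonotoneOn p (Icc 0 1))
    (hu : ∀ t ∈ Icc (0:ℝ) 1, |u t| ≤ M) {q ε x : ℝ} (hq : 0 < q) (hqp : q ≤ p 1)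
    (hε : 0 ≤ ε) (hsmall : ∀ t ∈ Icc (0:ℝ) 1, p t < q → u t ≤ c + ε)
    (hx : x ∈ Icc 0 (p 1)) :
    |concaveEnvelope p u c x - c| ≤ ε + (M + |c|) * x / q := by
  have huM : ∀ t ∈ Icc (0:ℝ) 1, u t ≤ M := fun t ht => (le_abs_self _).trans (hu t ht)
  have hM : 0 ≤ M + |c| := add_nonneg ((abs_nonneg _).trans (hu 0 (left_mem_Icc.2 zero_le_one)))
    (abs_nonneg c)
  have hp1 : 0 < p 1 := hq.trans_le hqp
  have hxq : x / p 1 ≤ x / q := div_le_div_of_nonneg_left hx.1 hq hqp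
  have hmaj : (fun y => (M + |c|) / q * y + (c + ε)) ∈ concaveMajorants p u c := by
    refine affine_mem_concaveMajorants (by linarith) fun t ht => ?_
    have hpt := apply_mem_Icc_of_monotoneOn hp0 hmono ht
    rcases lt_or_ge (p t) q with hlt | hge
    · have := mul_nonneg (div_nonneg hM hq.le) hpt.1
      linarith [hsmall t ht hlt]
    · have : M + |c| ≤ (M + |c|) / q * p t := by
        rw [div_mul_comm]; exact le_mul_of_one_le_left hM ((one_le_div hq).2 hge)
      linarith [huM t ht, neg_abs_le c]
  have hupper := concaveEnvelope_le hp1 hmaj hx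
  have hlower : c - x / p 1 * (c - u 1) ≤ concaveEnvelope p u c x :=
    le_concaveEnvelope huM fun _ hψ => sub_le_of_mem_concaveMajorants hp1 hψ hx
  have hchord : x / p 1 * (c - u 1) ≤ (M + |c|) * x / q := by
    calc x / p 1 * (c - u 1) ≤ x / p 1 * (M + |c|) := by
          gcongr
          · exact div_nonneg hx.1 hp1.le
          · linarith [le_abs_self c, neg_abs_le (u 1), hu 1 (right_mem_Icc.2 zero_le_one)]
      _ ≤ x / q * (M + |c|) := by gcongr
      _ = (M + |c|) * x / q := by ring
  rw [abs_le]
  constructor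
  · linarith
  · have : (M + |c|) / q * x = (M + |c|) * x / q := by ring
    linarith

/-- The slope is chosen so that the line clears `max c M` wherever `u` is not yet within `ε`
of `u 1`. -/
lemma exists_affine_mem_concaveMajorants_near_one (hp0 : p 0 = 0)
    (hmono : StrictMonoOn p (Icc 0 1)) (hu : ∀ t ∈ Icc (0:ℝ) 1, u t ≤ M)
    (hu1 : ContinuousWithinAt u (Icc 0 1) 1) {ε : ℝ} (hε : 0 < ε) :
    ∃ k d : ℝ, (fun x => k * x + d) ∈ concaveMajorants p u c ∧ k * p 1 + d = u 1 + ε := by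
  obtain ⟨δ, hδ, hnear⟩ := Metric.continuousWithinAt_iff.1 hu1 ε hε
  set a := max 0 (1 - δ)
  have ha : a ∈ Icc (0:ℝ) 1 := ⟨le_max_left _ _, max_le zero_le_one (by linarith)⟩
  have hone : (1:ℝ) ∈ Icc (0:ℝ) 1 := right_mem_Icc.2 zero_le_one
  have hgap : 0 < p 1 - p a :=
    sub_pos.2 (hmono ha hone (max_lt one_pos (by linarith)))
  set L := (max c M - u 1) / (p 1 - p a)
  have hL : 0 ≤ L := div_nonneg (sub_nonneg.2 ((hu 1 hone).trans (le_max_right _ _))) hgap.le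
  have hLgap : L * (p 1 - p a) = max c M - u 1 := div_mul_cancel₀ _ hgap.ne'
  have hpa : 0 ≤ p a := hp0 ▸ hmono.monotoneOn (left_mem_Icc.2 zero_le_one) ha ha.1
  refine ⟨-L, L * p 1 + (u 1 + ε), affine_mem_concaveMajorants ?_ fun t ht => ?_, by ring⟩
  · nlinarith [le_max_left c M]
  · rcases lt_or_ge (1 - δ) t with hclose | hfar
    · have hdist : dist t 1 < δ := by
        rw [Real.dist_eq, abs_sub_comm, abs_of_nonneg (by linarith [ht.2])]; linarith
      have hut := (abs_lt.1 (Real.dist_eq _ _ ▸ hnear ht hdist)).2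
      have := mul_nonneg hL (sub_nonneg.2 (hmono.monotoneOn ht hone ht.2))
      linarith
    · have hpt : p t ≤ p a := hmono.monotoneOn ht ha (le_max_of_le_right hfar)
      have := mul_le_mul_of_nonneg_left (sub_le_sub_left hpt (p 1)) hL
      linarith [hu t ht, le_max_right c M]

lemma concaveEnvelope_apply_one (hp0 : p 0 = 0) (hmono : StrictMonoOn p (Icc 0 1))
    (hu : ∀ t ∈ Icc (0:ℝ) 1, u t ≤ M) (hu1 : ContinuousWithinAt u (Icc 0 1) 1) :
    concaveEnvelope p u c (p 1) = u 1 := by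
  have hp1 : 0 < p 1 := hp0 ▸ hmono (left_mem_Icc.2 zero_le_one) (right_mem_Icc.2 zero_le_one)
    zero_lt_one
  refine le_antisymm (le_of_forall_pos_lt_add fun ε hε => ?_)
    (le_concaveEnvelope_comp hu (right_mem_Icc.2 zero_le_one))
  obtain ⟨k, d, hmaj, hval⟩ :=
    exists_affine_mem_concaveMajorants_near_one (c := c) hp0 hmono hu hu1 (half_pos hε)
  have := concaveEnvelope_le hp1 hmaj (right_mem_Icc.2 hp1.le)
  simp only [hval] at this
  linarith

lemma continuousWithinAt_concaveEnvelope_comp (hp0 : p 0 = 0)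
    (hmono : StrictMonoOn p (Icc 0 1)) (hpc : ContinuousOn p (Icc 0 1))
    (hu : ∀ t ∈ Icc (0:ℝ) 1, u t ≤ M) (hu1 : ContinuousWithinAt u (Icc 0 1) 1) {r : ℝ}
    (hr : r ∈ Ioc (0:ℝ) 1) :
    ContinuousWithinAt (fun t => concaveEnvelope p u c (p t)) (Icc 0 1) r := by
  have hzero : (0:ℝ) ∈ Icc (0:ℝ) 1 := left_mem_Icc.2 zero_le_one
  have hone : (1:ℝ) ∈ Icc (0:ℝ) 1 := right_mem_Icc.2 zero_le_one
  have hp1 : 0 < p 1 := hp0 ▸ hmono hzero hone zero_lt_one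
  rcases hr.2.lt_or_eq with hlt | rfl
  · have hr' : r ∈ Icc (0:ℝ) 1 := Ioc_subset_Icc_self hr
    have hpr : p r ∈ Ioo 0 (p 1) := ⟨hp0 ▸ hmono hzero hr' hr.1, hmono hr' hone hlt⟩
    exact ((continuousOn_concaveEnvelope hp1 hu).continuousAt
      (isOpen_Ioo.mem_nhds hpr)).comp_continuousWithinAt (hpc r hr')
  · rw [ContinuousWithinAt, concaveEnvelope_apply_one hp0 hmono hu hu1]
    refine tendsto_order.2 ⟨fun a ha => ?_, fun a ha => ?_⟩
    · filter_upwards [(tendsto_order.1 hu1).1 a ha, self_mem_nhdsWithin] with t hat ht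
      exact hat.trans_le (le_concaveEnvelope_comp hu ht)
    · obtain ⟨k, d, hmaj, hval⟩ := exists_affine_mem_concaveMajorants_near_one (c := c)
        hp0 hmono hu hu1 (half_pos (sub_pos.2 ha))
      have hlim : Tendsto (fun t => k * p t + d) (𝓝[Icc 0 1] 1) (𝓝 (k * p 1 + d)) :=
        ((hpc 1 hone).const_mul k).add_const d
      filter_upwards [(tendsto_order.1 hlim).2 a (by linarith), self_mem_nhdsWithin]
        with t hlt ht
      exact (concaveEnvelope_le hp1 hmaj
        (apply_mem_Icc_of_monotoneOn hp0 hmono.monotoneOn ht)).trans_lt hlt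

end ConcaveEnvelope

lemma setOf_pConcave_majorant_eq {p u : ℝ → ℝ} {c r : ℝ} (hp0 : p 0 = 0)
    (hr : r ∈ Icc (0:ℝ) 1) :
    {y : ℝ | ∃ φ : ℝ → ℝ, PConcave p φ ∧ (∀ t ∈ Icc (0:ℝ) 1, u t ≤ φ t) ∧ c ≤ φ 0 ∧
      y = φ r} = (fun ψ => ψ (p r)) '' concaveMajorants p u c := by
  ext y
  constructor
  · rintro ⟨φ, ⟨ψ, hcont, hconc, hφ⟩, hmaj, hc, rfl⟩
    refine ⟨ψ, ⟨hcont, hconc, fun t ht => hφ t ht ▸ hmaj t ht, ?_⟩, (hφ r hr).symm⟩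
    rw [← hp0, ← hφ 0 (left_mem_Icc.2 zero_le_one)]
    exact hc
  · rintro ⟨ψ, ⟨hcont, hconc, hmaj, hc⟩, rfl⟩
    exact ⟨ψ ∘ p, ⟨ψ, hcont, hconc, fun _ _ => rfl⟩, hmaj, by simpa [hp0] using hc, rfl⟩

lemma pbar_zero (b s : ℝ → ℝ → ℝ) (θ : ℝ) : pbar b s θ 0 = 0 := by
  simp [pbar, pscale]

lemma UcTheta_eq_concaveEnvelope (b s : ℝ → ℝ → ℝ) (U : EuclideanSpace ℝ (Fin 2) → ℝ)
    (c θ : ℝ) {r : ℝ} (hr : r ∈ Icc (0:ℝ) 1) :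
    UcTheta b s U c θ r =
      concaveEnvelope (pbar b s θ) (fun t => U (polar t θ)) c (pbar b s θ r) := by
  rw [UcTheta, concaveEnvelope, ← setOf_pConcave_majorant_eq (pbar_zero b s θ) hr]

lemma integrableOn_Ioc_of_bounded {f : ℝ → ℝ} {a y C : ℝ} (hay : a < y)
    (hloc : ∀ a' ∈ Ioo a y, IntegrableOn f (Icc a' y)) (hC : ∀ z ∈ Ioc a y, |f z| ≤ C) :
    IntegrableOn f (Ioc a y) := by
  obtain ⟨v, -, hv, hlim⟩ := exists_seq_strictAnti_tendsto' hay
  have hunion : Ioc a y = ⋃ n, Icc (v n) y := by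
    ext z
    simp only [mem_Ioc, mem_iUnion, mem_Icc]
    refine ⟨fun hz => ?_, fun ⟨n, hn⟩ => ⟨(hv n).1.trans_le hn.1, hn.2⟩⟩
    obtain ⟨n, hn⟩ := (hlim.eventually (gt_mem_nhds hz.1)).exists
    exact ⟨n, hn.le, hz.2⟩
  refine Integrable.mono' (g := fun _ => C) (integrableOn_const measure_Ioc_lt_top.ne) ?_
    ((ae_restrict_iff' measurableSet_Ioc).2 (Eventually.of_forall hC))
  rw [hunion, aestronglyMeasurable_iUnion_iff]
  exact fun n => (hloc (v n) (hv n)).aestronglyMeasurable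

lemma continuousOn_Ico_of_forall_Icc {f : ℝ → ℝ} {a c : ℝ}
    (h : ∀ m ∈ Ico a c, ContinuousOn f (Icc a m)) : ContinuousOn f (Ico a c) :=
  continuousOn_of_locally_continuousOn fun x hx =>
    ⟨Iio ((x + c) / 2), isOpen_Iio, mem_Iio.2 (by linarith [hx.2]),
      (h _ ⟨by linarith [hx.1, hx.2], by linarith [hx.2]⟩).mono fun _ hy => ⟨hy.1.1, hy.2.le⟩⟩

section ScaleFunction

variable {b s : ℝ → ℝ → ℝ}

lemma CondC.exists_drift_bound (h : CondC (fun _ => (1:ℝ≥0∞)) b s) :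
    ∃ η C : ℝ, 0 < η ∧ η < 1 ∧ 0 ≤ C ∧ ∀ θ ∈ Ico (0:ℝ) (2 * Real.pi), ∀ r ∈ Ioc (0:ℝ) η,
      |b r θ / s r θ ^ 2| ≤ C := by
  obtain ⟨η, hη, hη1, C, hC⟩ := h.bound_near_origin
  have h0 : (0:ℝ) ∈ Ico (0:ℝ) (2 * Real.pi) := ⟨le_rfl, by positivity⟩
  have hinf : (⨅ θ ∈ Ico (0:ℝ) (2 * Real.pi), (1:ℝ≥0∞)) = 1 :=
    le_antisymm ((iInf₂_le 0 h0).trans le_rfl) (le_iInf₂ fun _ _ => le_rfl)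
  rw [hinf, ENNReal.ofReal_lt_one] at hη1
  have hdrift : ∀ θ ∈ Ico (0:ℝ) (2 * Real.pi), ∀ r ∈ Ioc (0:ℝ) η,
      |b r θ / s r θ ^ 2| ≤ C := fun θ hθ r hr => by
    rw [abs_div, abs_of_nonneg (sq_nonneg (s r θ))]
    exact (div_le_div_of_nonneg_right (by linarith) (sq_nonneg _)).trans (hC θ hθ r hr)
  exact ⟨η, C, hη, hη1, (abs_nonneg _).trans (hdrift 0 h0 η ⟨hη, le_rfl⟩), hdrift⟩

lemma CondC.integrableOn_drift (h : CondC (fun _ => (1:ℝ≥0∞)) b s) {θ : ℝ}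
    (hθ : θ ∈ Ico (0:ℝ) (2 * Real.pi)) {y : ℝ} (hy : y < 1) :
    IntegrableOn (fun z => b z θ / s z θ ^ 2) (Ioc 0 y) := by
  have hloc : ∀ r₁ r₂ : ℝ, 0 < r₁ → r₁ ≤ r₂ → r₂ < 1 →
      IntegrableOn (fun z => b z θ / s z θ ^ 2) (Icc r₁ r₂) := fun r₁ r₂ h₁ h₁₂ h₂ => by
    simpa using h.loc_int_b θ hθ r₁ r₂ h₁ h₁₂ (by simpa using h₂)
  rcases le_or_gt y 0 with hy0 | hy0
  · simp [Ioc_eq_empty (not_lt.2 hy0)]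
  obtain ⟨η, C, hη, -, -, hC⟩ := h.exists_drift_bound
  have hm : 0 < min y η := lt_min hy0 hη
  rw [← Ioc_union_Ioc_eq_Ioc hm.le (min_le_left _ _)]
  exact (integrableOn_Ioc_of_bounded hm
      (fun a ha => hloc a _ ha.1 ha.2.le ((min_le_left _ _).trans_lt hy))
      (fun z hz => hC θ hθ z ⟨hz.1, hz.2.trans (min_le_right _ _)⟩)).union
    ((hloc _ y hm (min_le_left _ _) hy).mono_set Ioc_subset_Icc_self)

lemma pscale_le_pbar_one {θ : ℝ} (hbdd : BddAbove (pscale b s θ '' Ico (0:ℝ) 1)) {r : ℝ}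
    (hr : r ∈ Ico (0:ℝ) 1) : pscale b s θ r ≤ pbar b s θ 1 := by
  rw [pbar, if_neg (lt_irrefl 1)]
  exact le_csSup hbdd (mem_image_of_mem _ hr)

section Integrable

variable {θ : ℝ} (hint : ∀ y < 1, IntegrableOn (fun z => b z θ / s z θ ^ 2) (Ioc 0 y))
include hint

lemma continuousOn_pprime : ContinuousOn (pprime b s θ) (Ico 0 1) := by
  refine continuousOn_Ico_of_forall_Icc fun m hm => ?_
  have hprim := intervalIntegral.continuousOn_primitive_interval (a := 0) (b := m)
    (f := fun z => b z θ / s z θ ^ 2) (μ := volume)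
    (by rw [uIcc_of_le hm.1, integrableOn_Icc_iff_integrableOn_Ioc]; exact hint m hm.2)
  rw [uIcc_of_le hm.1] at hprim
  exact Real.continuous_exp.comp_continuousOn (continuousOn_const.mul hprim)

lemma intervalIntegrable_pprime {r r' : ℝ} (hr : 0 ≤ r) (hrr' : r ≤ r') (hr' : r' < 1) :
    IntervalIntegrable (pprime b s θ) volume r r' :=
  ((continuousOn_pprime hint).mono (Icc_subset_Ico hr hr')).intervalIntegrable_of_Icc hrr'

lemma continuousOn_pscale : ContinuousOn (pscale b s θ) (Ico 0 1) := by
  refine continuousOn_Ico_of_forall_Icc fun m hm => ?_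
  have hprim := intervalIntegral.continuousOn_primitive_interval (a := 0) (b := m)
    (f := pprime b s θ) (μ := volume)
    (by rw [uIcc_of_le hm.1]
        exact ((continuousOn_pprime hint).mono (Icc_subset_Ico_right hm.2)).integrableOn_Icc)
  rwa [uIcc_of_le hm.1] at hprim

lemma strictMonoOn_pscale : StrictMonoOn (pscale b s θ) (Ico 0 1) := by
  intro r hr r' hr' hlt
  have hdiff : pscale b s θ r' - pscale b s θ r = ∫ y in r..r', pprime b s θ y :=
    intervalIntegral.integral_interval_sub_left
      (intervalIntegrable_pprime hint le_rfl hr'.1 hr'.2)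
      (intervalIntegrable_pprime hint le_rfl hr.1 hr.2)
  have hpos := intervalIntegral.intervalIntegral_pos_of_pos_on
    (intervalIntegrable_pprime hint hr.1 hlt.le hr'.2) (fun y _ => Real.exp_pos _) hlt
  linarith

variable (hbdd : BddAbove (pscale b s θ '' Ico (0:ℝ) 1))
include hbdd

lemma strictMonoOn_pbar : StrictMonoOn (pbar b s θ) (Icc 0 1) := by
  intro r hr r' hr' hlt
  have hr1 : r < 1 := hlt.trans_le hr'.2
  rw [pbar, if_pos hr1]
  rcases hr'.2.lt_or_eq with hr'1 | rfl
  · rw [pbar, if_pos hr'1]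
    exact strictMonoOn_pscale hint ⟨hr.1, hr1⟩ ⟨hr'.1, hr'1⟩ hlt
  · have hmid : (r + 1) / 2 ∈ Ico (0:ℝ) 1 := ⟨by linarith [hr.1], by linarith⟩
    exact (strictMonoOn_pscale hint ⟨hr.1, hr1⟩ hmid (by linarith)).trans_le
      (pscale_le_pbar_one hbdd hmid)

lemma continuousOn_pbar : ContinuousOn (pbar b s θ) (Icc 0 1) := by
  intro r hr
  rcases hr.2.lt_or_eq with hr1 | rfl
  · have hIco : ContinuousOn (pbar b s θ) (Ico 0 1) :=
      (continuousOn_pscale hint).congr fun r hr => if_pos hr.2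
    exact (hIco r ⟨hr.1, hr1⟩).mono_of_mem_nhdsWithin
      (mem_nhdsWithin.2 ⟨Iio 1, isOpen_Iio, hr1, fun x hx => ⟨hx.2.1, hx.1⟩⟩)
  have hmono := (strictMonoOn_pbar hint hbdd).monotoneOn
  refine tendsto_order.2 ⟨fun a ha => ?_, fun a ha => ?_⟩
  · rw [pbar, if_neg (lt_irrefl 1)] at ha
    obtain ⟨_, ⟨t, ht, rfl⟩, hat⟩ :=
      exists_lt_of_lt_csSup ((nonempty_Ico.2 zero_lt_one).image _) ha
    filter_upwards [nhdsWithin_le_nhds (lt_mem_nhds ht.2), self_mem_nhdsWithin] with r htr hr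
    calc a < pscale b s θ t := hat
      _ = pbar b s θ t := (if_pos ht.2).symm
      _ ≤ pbar b s θ r := hmono ⟨ht.1, ht.2.le⟩ hr htr.le
  · filter_upwards [self_mem_nhdsWithin] with r hr
    exact (hmono hr (right_mem_Icc.2 zero_le_one) hr.2).trans_lt ha

end Integrable

lemma pprime_mem_Icc {θ η C : ℝ} (hC0 : 0 ≤ C)
    (hC : ∀ r ∈ Ioc (0:ℝ) η, |b r θ / s r θ ^ 2| ≤ C) {y : ℝ} (hy : y ∈ Icc 0 η) :
    pprime b s θ y ∈ Icc (Real.exp (-(2 * C * η))) (Real.exp (2 * C * η)) := by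
  have hI : |∫ z in (0:ℝ)..y, b z θ / s z θ ^ 2| ≤ C * y := by
    have := intervalIntegral.norm_integral_le_of_norm_le_const
      (f := fun z => b z θ / s z θ ^ 2) fun z hz => by
        rw [uIoc_of_le hy.1] at hz
        exact hC z ⟨hz.1, hz.2.trans hy.2⟩
    rwa [sub_zero, abs_of_nonneg hy.1] at this
  have hCy : C * y ≤ C * η := mul_le_mul_of_nonneg_left hy.2 hC0
  obtain ⟨h₁, h₂⟩ := abs_le.1 hI
  exact ⟨Real.exp_le_exp.2 (by linarith), Real.exp_le_exp.2 (by linarith)⟩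

lemma CondC.exists_pbar_bounds (h : CondC (fun _ => (1:ℝ≥0∞)) b s) :
    ∃ η A : ℝ, 0 < η ∧ η ≤ 1 ∧ 0 < A ∧ ∀ θ ∈ Ico (0:ℝ) (2 * Real.pi), ∀ r ∈ Icc 0 η,
      r / A ≤ pbar b s θ r ∧ pbar b s θ r ≤ A * r := by
  obtain ⟨η, C, hη, hη1, hC0, hC⟩ := h.exists_drift_bound
  refine ⟨η, Real.exp (2 * C * η), hη, hη1.le, Real.exp_pos _, fun θ hθ r hr => ?_⟩
  have hint := intervalIntegrable_pprime (fun _ => h.integrableOn_drift hθ) le_rfl hr.1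
    (hr.2.trans_lt hη1)
  have hpp := fun y (hy : y ∈ Icc 0 r) => pprime_mem_Icc hC0 (hC θ hθ) ⟨hy.1, hy.2.trans hr.2⟩
  rw [pbar, if_pos (hr.2.trans_lt hη1), pscale, div_eq_mul_inv, ← Real.exp_neg, mul_comm _ r]
  constructor
  · simpa using intervalIntegral.integral_mono_on hr.1 intervalIntegrable_const hint
      fun y hy => (hpp y hy).1
  · simpa using intervalIntegral.integral_mono_on hr.1 hint intervalIntegrable_const
      fun y hy => (hpp y hy).2

end ScaleFunction

section Rays

variable {b s : ℝ → ℝ → ℝ} {U : EuclideanSpace ℝ (Fin 2) → ℝ} {c M θ : ℝ}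

lemma UcTheta_one (hmono : StrictMonoOn (pbar b s θ) (Icc 0 1))
    (hM : ∀ t ∈ Icc (0:ℝ) 1, U (polar t θ) ≤ M)
    (hU1 : ContinuousWithinAt (fun t => U (polar t θ)) (Icc 0 1) 1) :
    UcTheta b s U c θ 1 = U (polar 1 θ) := by
  rw [UcTheta_eq_concaveEnvelope b s U c θ (right_mem_Icc.2 zero_le_one)]
  exact concaveEnvelope_apply_one (pbar_zero b s θ) hmono hM hU1

lemma continuousWithinAt_UcTheta (hmono : StrictMonoOn (pbar b s θ) (Icc 0 1))
    (hcont : ContinuousOn (pbar b s θ) (Icc 0 1)) (hM : ∀ t ∈ Icc (0:ℝ) 1, U (polar t θ) ≤ M)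
    (hU1 : ContinuousWithinAt (fun t => U (polar t θ)) (Icc 0 1) 1) {r : ℝ}
    (hr : r ∈ Ioc (0:ℝ) 1) : ContinuousWithinAt (UcTheta b s U c θ) (Icc 0 1) r :=
  (continuousWithinAt_concaveEnvelope_comp (pbar_zero b s θ) hmono hcont hM hU1 hr).congr
    (fun _ ht => UcTheta_eq_concaveEnvelope b s U c θ ht)
    (UcTheta_eq_concaveEnvelope b s U c θ (Ioc_subset_Icc_self hr))

lemma abs_UcTheta_sub_le {η A δ ε : ℝ} (hη1 : η ≤ 1) (hA : 0 < A) (hδ : δ ∈ Ioc 0 η)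
    (hmono : StrictMonoOn (pbar b s θ) (Icc 0 1))
    (hbound : ∀ r ∈ Icc 0 η, r / A ≤ pbar b s θ r ∧ pbar b s θ r ≤ A * r)
    (hM : ∀ x : EuclideanSpace ℝ (Fin 2), ‖x‖ ≤ 1 → |U x| ≤ M) (hε : 0 ≤ ε)
    (hsmall : ∀ t ∈ Icc (0:ℝ) 1, t < δ → U (polar t θ) ≤ c + ε) {r : ℝ}
    (hr : r ∈ Icc (0:ℝ) 1) (hrδ : r ≤ δ) :
    |UcTheta b s U c θ r - c| ≤ ε + (M + |c|) * A ^ 2 / δ * r := by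
  have hδmem : δ ∈ Icc (0:ℝ) 1 := ⟨hδ.1.le, hδ.2.trans hη1⟩
  have hMc : 0 ≤ M + |c| := add_nonneg ((abs_nonneg _).trans (hM 0 (by simp))) (abs_nonneg c)
  have hq : δ / A ≤ pbar b s θ δ := (hbound δ ⟨hδ.1.le, hδ.2⟩).1
  have hpr : pbar b s θ r ≤ A * r := (hbound r ⟨hr.1, hrδ.trans hδ.2⟩).2
  rw [UcTheta_eq_concaveEnvelope b s U c θ hr]
  refine (abs_concaveEnvelope_sub_le (pbar_zero b s θ) hmono.monotoneOn
    (fun t ht => hM _ (norm_polar_le_one θ ht)) ((div_pos hδ.1 hA).trans_le hq)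
    (hmono.monotoneOn hδmem (right_mem_Icc.2 zero_le_one) hδmem.2) hε
    (fun t ht hlt => hsmall t ht ((hmono.lt_iff_lt ht hδmem).1 hlt))
    (apply_mem_Icc_of_monotoneOn (pbar_zero b s θ) hmono.monotoneOn hr)).trans ?_
  calc ε + (M + |c|) * pbar b s θ r / pbar b s θ δ
      ≤ ε + (M + |c|) * (A * r) / (δ / A) := by
        gcongr
        · exact mul_nonneg hMc (mul_nonneg hA.le hr.1)
        · exact div_pos hδ.1 hA
    _ = ε + (M + |c|) * A ^ 2 / δ * r := by field_simp

lemma UcTheta_near_zero_uniformly {η A : ℝ} (hη : 0 < η) (hη1 : η ≤ 1) (hA : 0 < A)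
    (hmono : ∀ θ ∈ Ico (0:ℝ) (2 * Real.pi), StrictMonoOn (pbar b s θ) (Icc 0 1))
    (hbound : ∀ θ ∈ Ico (0:ℝ) (2 * Real.pi), ∀ r ∈ Icc 0 η,
      r / A ≤ pbar b s θ r ∧ pbar b s θ r ≤ A * r)
    (hM : ∀ x : EuclideanSpace ℝ (Fin 2), ‖x‖ ≤ 1 → |U x| ≤ M)
    (hU0 : ∀ ε > (0:ℝ), ∃ δ > (0:ℝ), ∀ y : EuclideanSpace ℝ (Fin 2), ‖y‖ ≤ 1 →
      treeDist 0 y < δ → |U y - U 0| < ε)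
    (hc : U 0 ≤ c) :
    ∀ ε > (0:ℝ), ∃ δ > (0:ℝ), ∀ θ ∈ Ico (0:ℝ) (2 * Real.pi), ∀ r ∈ Icc (0:ℝ) 1, r < δ →
      |UcTheta b s U c θ r - c| < ε := by
  intro ε hε
  obtain ⟨δ₀, hδ₀, hUδ₀⟩ := hU0 (ε / 2) (half_pos hε)
  set δ₁ := min δ₀ η
  have hδ₁ : δ₁ ∈ Ioc 0 η := ⟨lt_min hδ₀ hη, min_le_right _ _⟩
  have hsmall θ : ∀ t ∈ Icc (0:ℝ) 1, t < δ₁ → U (polar t θ) ≤ c + ε / 2 := fun t ht htδ => by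
    have := hUδ₀ _ (norm_polar_le_one θ ht) (by
      rw [treeDist_zero_left, norm_polar, abs_of_nonneg ht.1]
      exact htδ.trans_le (min_le_left _ _))
    linarith [(abs_lt.1 this).2]
  set D := (M + |c|) * A ^ 2 / δ₁
  have hD : 0 ≤ D :=
    div_nonneg (mul_nonneg (add_nonneg ((abs_nonneg _).trans (hM 0 (by simp))) (abs_nonneg c))
      (sq_nonneg A)) hδ₁.1.le
  refine ⟨min δ₁ (ε / (2 * (D + 1))), lt_min hδ₁.1 (by positivity), fun θ hθ r hr hrδ => ?_⟩
  have hDr : D * r < ε / 2 := by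
    calc D * r ≤ (D + 1) * r := by nlinarith [hr.1]
      _ < (D + 1) * (ε / (2 * (D + 1))) := by gcongr; exact hrδ.trans_le (min_le_right _ _)
      _ = ε / 2 := by field_simp
  have := abs_UcTheta_sub_le hη1 hA hδ₁ (hmono θ hθ) (hbound θ hθ) hM (half_pos hε).le
    (hsmall θ) hr (hrδ.le.trans (min_le_left _ _))
  linarith

end Rays

theorem UcDisc_tree_continuous_general (b s : ℝ → ℝ → ℝ)
    (h : CondC (fun _ => (1 : ℝ≥0∞)) b s)
    (hfin : ∀ θ ∈ Ico (0:ℝ) (2 * Real.pi), BddAbove (pscale b s θ '' Ico (0:ℝ) 1))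
    (U : EuclideanSpace ℝ (Fin 2) → ℝ)
    (hUbdd : ∃ M : ℝ, ∀ x : EuclideanSpace ℝ (Fin 2), ‖x‖ ≤ 1 → |U x| ≤ M)
    (hUcont : ∀ x : EuclideanSpace ℝ (Fin 2), ‖x‖ ≤ 1 → ∀ ε > (0:ℝ), ∃ δ > (0:ℝ),
      ∀ y : EuclideanSpace ℝ (Fin 2), ‖y‖ ≤ 1 → treeDist x y < δ → |U y - U x| < ε)
    (c : ℝ) (hc : U 0 ≤ c) :
    (∀ x : EuclideanSpace ℝ (Fin 2), ‖x‖ ≤ 1 → ∀ ε > (0:ℝ), ∃ δ > (0:ℝ),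
      ∀ y : EuclideanSpace ℝ (Fin 2), ‖y‖ ≤ 1 → treeDist x y < δ →
        |UcDisc b s U c y - UcDisc b s U c x| < ε) ∧
    UcDisc b s U c 0 = c ∧
    (∀ θ ∈ Ico (0:ℝ) (2 * Real.pi), UcTheta b s U c θ 1 = U (polar 1 θ)) ∧
    (∀ ε > (0:ℝ), ∃ δ > (0:ℝ), ∀ r ∈ Ioo (0:ℝ) δ, ∀ θ ∈ Ico (0:ℝ) (2 * Real.pi),
      |UcTheta b s U c θ r - c| < ε) := by
  obtain ⟨M, hM⟩ := hUbdd
  obtain ⟨η, A, hη, hη1, hA, hbound⟩ := h.exists_pbar_bounds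
  have hint θ (hθ : θ ∈ Ico (0:ℝ) (2 * Real.pi)) y (hy : y < 1) := h.integrableOn_drift hθ hy
  have hmono θ hθ := strictMonoOn_pbar (hint θ hθ) (hfin θ hθ)
  have hMray θ : ∀ t ∈ Icc (0:ℝ) 1, U (polar t θ) ≤ M :=
    fun t ht => (le_abs_self _).trans (hM _ (norm_polar_le_one θ ht))
  have hU1 θ := continuousWithinAt_comp_polar hUcont θ (right_mem_Icc.2 zero_le_one)
  have hzero := UcTheta_near_zero_uniformly hη hη1 hA hmono hbound hM (hUcont 0 (by simp)) hc
  have hray θ hθ r (hr : r ∈ Ioc (0:ℝ) 1) :=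
    continuousWithinAt_UcTheta (c := c) (hmono θ hθ)
      (continuousOn_pbar (hint θ hθ) (hfin θ hθ)) (hMray θ) (hU1 θ) hr
  refine ⟨fun x hx => treeContinuous_of_rays _ c hzero hray hx, ?_,
    fun θ hθ => UcTheta_one (hmono θ hθ) (hMray θ) (hU1 θ), fun ε hε => ?_⟩
  · refine eq_of_forall_dist_le fun ε hε => ?_
    obtain ⟨δ, hδ, hδc⟩ := hzero ε hε
    simpa [UcDisc, Real.dist_eq] using
      (hδc _ (argOf_mem 0) 0 (left_mem_Icc.2 zero_le_one) hδ).le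
  · obtain ⟨δ, hδ, hδc⟩ := hzero ε hε
    exact ⟨min δ 1, lt_min hδ one_pos, fun r hr θ hθ =>
      hδc θ hθ r ⟨hr.1.le, hr.2.le.trans (min_le_right _ _)⟩ (hr.2.trans_le (min_le_left _ _))⟩

/-- Under Condition (C) with `ℓ ≡ 1` and `p_θ(1−) < ∞` for every `θ`: for a bounded,
Borel, tree-continuous reward `U` on the closed unit disc and `c ≥ U(0)`, the ray-wise
smallest `p`-concave majorant `U⁽ᶜ⁾` is continuous on the closed disc in the
tree-topology; in particular `U⁽ᶜ⁾(0) = c`, `U⁽ᶜ⁾(1,θ) = U(1,θ)` for every `θ`, and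
`sup_θ |U⁽ᶜ⁾_θ(r) − c| → 0` as `r ↓ 0`. -/
theorem UcDisc_tree_continuous (b s : ℝ → ℝ → ℝ)
    (h : CondC (fun _ => (1 : ℝ≥0∞)) b s)
    (hfin : ∀ θ ∈ Ico (0:ℝ) (2 * Real.pi), BddAbove (pscale b s θ '' Ico (0:ℝ) 1))
    (U : EuclideanSpace ℝ (Fin 2) → ℝ)
    (hUmeas : Measurable (Set.restrict {x : EuclideanSpace ℝ (Fin 2) | ‖x‖ ≤ 1} U))
    (hUbdd : ∃ M : ℝ, ∀ x : EuclideanSpace ℝ (Fin 2), ‖x‖ ≤ 1 → |U x| ≤ M)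
    (hUcont : ∀ x : EuclideanSpace ℝ (Fin 2), ‖x‖ ≤ 1 → ∀ ε > (0:ℝ), ∃ δ > (0:ℝ),
      ∀ y : EuclideanSpace ℝ (Fin 2), ‖y‖ ≤ 1 → treeDist x y < δ → |U y - U x| < ε)
    (c : ℝ) (hc : U 0 ≤ c) :
    (∀ x : EuclideanSpace ℝ (Fin 2), ‖x‖ ≤ 1 → ∀ ε > (0:ℝ), ∃ δ > (0:ℝ),
      ∀ y : EuclideanSpace ℝ (Fin 2), ‖y‖ ≤ 1 → treeDist x y < δ →
        |UcDisc b s U c y - UcDisc b s U c x| < ε) ∧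
    UcDisc b s U c 0 = c ∧
    (∀ θ ∈ Ico (0:ℝ) (2 * Real.pi), UcTheta b s U c θ 1 = U (polar 1 θ)) ∧
    (∀ ε > (0:ℝ), ∃ δ > (0:ℝ), ∀ r ∈ Ioo (0:ℝ) δ, ∀ θ ∈ Ico (0:ℝ) (2 * Real.pi),
      |UcTheta b s U c θ r - c| < ε) :=
  UcDisc_tree_continuous_general b s h hfin U hUbdd hUcont c hc
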